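/- Let p > 1 be a real number. For all real numbers a₁, a₂, b₁, b₂, one has (Φ_p(b₂ − b₁) − Φ_p(a₂ − a₁))·((a₂ − b₂)⁺ − (a₁ − b₁)⁺) ≤ 0. -/

import Mathlib

/-!
`Φ_p` is odd and agrees with `t ^ (p - 1)` on `t ≥ 0`, hence is monotone. Since
`a₂ - a₁ ≤ b₂ - b₁` iff `a₂ - b₂ ≤ a₁ - b₁`, and `t ↦ t⁺` is monotone, the two factors of the
product always have opposite signs, whatever monotone function replaces `Φ_p`.
-/

/-- `Φ_p(t) = |t|^{p-2} t`. -/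
noncomputable def Phi (p t : ℝ) : ℝ := |t| ^ (p - 2) * t

theorem mul_sub_max_sub_nonpos_of_monotone {R : Type*} [Ring R] [LinearOrder R]
    [IsStrictOrderedRing R] {f : R → R} (hf : Monotone f) (a₁ a₂ b₁ b₂ : R) :
    (f (b₂ - b₁) - f (a₂ - a₁)) * (max (a₂ - b₂) 0 - max (a₁ - b₁) 0) ≤ 0 := by
  rcases le_total (a₂ - a₁) (b₂ - b₁) with h | h
  · refine mul_nonpos_of_nonneg_of_nonpos (sub_nonneg.mpr (hf h)) (sub_nonpos.mpr ?_)
    exact max_le_max_right 0 (by rw [sub_le_sub_iff] at h ⊢; rwa [add_comm a₁])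
  · refine mul_nonpos_of_nonpos_of_nonneg (sub_nonpos.mpr (hf h)) (sub_nonneg.mpr ?_)
    exact max_le_max_right 0 (by rw [sub_le_sub_iff] at h ⊢; rwa [add_comm a₁])

theorem Phi_neg (p t : ℝ) : Phi p (-t) = -Phi p t := by
  simp [Phi]

theorem Phi_of_nonneg {p t : ℝ} (hp : p ≠ 1) (ht : 0 ≤ t) : Phi p t = t ^ (p - 1) := by
  rcases ht.eq_or_lt with rfl | ht
  · simp [Phi, Real.zero_rpow (sub_ne_zero.mpr hp)]
  · rw [Phi, abs_of_pos ht, ← Real.rpow_add_one ht.ne']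
    ring_nf

theorem Phi_monotone {p : ℝ} (hp : 1 < p) : Monotone (Phi p) := by
  refine monotone_of_odd_of_monotoneOn_nonneg (Phi_neg p) ?_
  exact (Real.monotoneOn_rpow_Ici_of_exponent_nonneg (sub_nonneg.mpr hp.le)).congr
    fun t ht => (Phi_of_nonneg hp.ne' ht).symm

/-- Pointwise sign of the integrand when the positive part `(u − v)⁺` is used as a test
function in the proof of the comparison principle. -/
theorem Phi_monotone_posPart_pointwise (p : ℝ) (hp : 1 < p) (a₁ a₂ b₁ b₂ : ℝ) :
    (Phi p (b₂ - b₁) - Phi p (a₂ - a₁)) * (max (a₂ - b₂) 0 - max (a₁ - b₁) 0) ≤ 0 :=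
  mul_sub_max_sub_nonpos_of_monotone (Phi_monotone hp) a₁ a₂ b₁ b₂
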